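/- Correctness of the flattened incremental computation (Theorem 2, stated for the union of the program components): let D be a definite C+ action description in which every constant has a domain with at least two elements, let k be a nonnegative integer, and let F(k) be a formula of the signature of cplus2mvpf(D,k). A multi-valued interpretation I of the signature of cplus2mvpf(D,k) is a multi-valued stable model of cplus2mvpf(D,k) ∪ {⊥ ← ¬F(k)} if and only if I^prop is a propositional stable model of the conjunction of all formulas in B ∪ P[1] ∪ ⋯ ∪ P[k] ∪ Q[k]; conversely, a propositional interpretation J of the translated signature is a propositional stable model of this conjunction if and only if J = I^prop for some multi-valued stable model I of cplus2mvpf(D,k) ∪ {⊥ ← ¬F(k)}. -/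
import Mathlib


/-! Core definitions: multi-valued propositional formulas under the stable model
semantics (Bartholomew–Lee), propositional formulas under the stable model
semantics (Ferraris), and the translation between them. -/

/-- Multi-valued propositional formulas over constants `σ` and values `V`.
`¬F` abbreviates `F → ⊥`, and `G ← F` denotes `F → G`. -/
inductive MVF (σ V : Type) : Type where
  | bot : MVF σ V
  | atom : σ → V → MVF σ V
  | and : MVF σ V → MVF σ V → MVF σ V
  | or : MVF σ V → MVF σ V → MVF σ V
  | imp : MVF σ V → MVF σ V → MVF σ V
  deriving DecidableEq

namespace MVF

variable {σ V : Type}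

/-- `¬F` is `F → ⊥`. -/
def neg (F : MVF σ V) : MVF σ V := .imp F .bot

/-- Classical satisfaction of a multi-valued formula by `I : σ → V`. -/
def sat (I : σ → V) : MVF σ V → Prop
  | .bot => False
  | .atom c v => I c = v
  | .and F G => F.sat I ∧ G.sat I
  | .or F G => F.sat I ∨ G.sat I
  | .imp F G => F.sat I → G.sat I

open Classical in
/-- The reduct `F^I`: replace each maximal subformula not satisfied by `I` with `⊥`. -/
noncomputable def reduct (I : σ → V) : MVF σ V → MVF σ V
  | .bot => .bot
  | .atom c v => if I c = v then .atom c v else .bot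
  | .and F G => if (MVF.and F G).sat I then .and (F.reduct I) (G.reduct I) else .bot
  | .or F G => if (MVF.or F G).sat I then .or (F.reduct I) (G.reduct I) else .bot
  | .imp F G => if (MVF.imp F G).sat I then .imp (F.reduct I) (G.reduct I) else .bot

/-- A formula is a formula *of the signature* `Dom` when every atom `c=v`
occurring in it satisfies `v ∈ Dom c`. -/
def wf (Dom : σ → Finset V) : MVF σ V → Prop
  | .bot => True
  | .atom c v => v ∈ Dom c
  | .and F G => F.wf Dom ∧ G.wf Dom
  | .or F G => F.wf Dom ∧ G.wf Dom
  | .imp F G => F.wf Dom ∧ G.wf Dom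

/-- The set of constants occurring in a formula. -/
def consts : MVF σ V → Set σ
  | .bot => ∅
  | .atom c _ => {c}
  | .and F G => F.consts ∪ G.consts
  | .or F G => F.consts ∪ G.consts
  | .imp F G => F.consts ∪ G.consts

end MVF

/-- `I` is a multi-valued interpretation of the signature whose domains are given
by `Dom` (it maps every constant into its domain). -/
def isInterp {σ V : Type} (Dom : σ → Finset V) (I : σ → V) : Prop := ∀ c, I c ∈ Dom c

/-- `I` is a multi-valued stable model of `F`: `I` is the unique multi-valued
interpretation of the signature satisfying the reduct `F^I`. -/
def isMVStable {σ V : Type} (Dom : σ → Finset V) (F : MVF σ V) (I : σ → V) : Prop :=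
  isInterp Dom I ∧ (F.reduct I).sat I ∧
    ∀ J : σ → V, isInterp Dom J → (F.reduct I).sat J → J = I

/-- Stable models of a set of multi-valued formulas (a finite set of formulas
is identified with the conjunction of its members). -/
def isMVStableSet {σ V : Type} (Dom : σ → Finset V) (Γ : Set (MVF σ V)) (I : σ → V) : Prop :=
  isInterp Dom I ∧ (∀ F ∈ Γ, (F.reduct I).sat I) ∧
    ∀ J : σ → V, isInterp Dom J → (∀ F ∈ Γ, (F.reduct I).sat J) → J = I

/-- Propositional formulas over a set `A` of propositional atoms. -/
inductive PF (A : Type) : Type where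
  | bot : PF A
  | atom : A → PF A
  | and : PF A → PF A → PF A
  | or : PF A → PF A → PF A
  | imp : PF A → PF A → PF A
  deriving DecidableEq

namespace PF

variable {A : Type}

/-- `¬F` is `F → ⊥`. -/
def neg (F : PF A) : PF A := .imp F .bot

/-- Classical satisfaction of a propositional formula by `J : A → Prop`. -/
def sat (J : A → Prop) : PF A → Prop
  | .bot => False
  | .atom a => J a
  | .and F G => F.sat J ∧ G.sat J
  | .or F G => F.sat J ∨ G.sat J
  | .imp F G => F.sat J → G.sat J

open Classical in
/-- The reduct `F^J`: replace each maximal subformula not satisfied by `J` with `⊥`. -/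
noncomputable def reduct (J : A → Prop) : PF A → PF A
  | .bot => .bot
  | .atom a => if J a then .atom a else .bot
  | .and F G => if (PF.and F G).sat J then .and (F.reduct J) (G.reduct J) else .bot
  | .or F G => if (PF.or F G).sat J then .or (F.reduct J) (G.reduct J) else .bot
  | .imp F G => if (PF.imp F G).sat J then .imp (F.reduct J) (G.reduct J) else .bot

end PF

/-- `J` is a propositional stable model of `F`: `J` satisfies the reduct `F^J` and is
minimal, with respect to the set of atoms it makes true, among the interpretations
satisfying `F^J`. -/
def isPStable {A : Type} (F : PF A) (J : A → Prop) : Prop :=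
  (F.reduct J).sat J ∧
    ∀ K : A → Prop, (F.reduct J).sat K → (∀ a, K a → J a) → ∀ a, J a ↔ K a

/-- Propositional stable models of a set of propositional formulas (identified
with the conjunction of its members). -/
def isPStableSet {A : Type} (Γ : Set (PF A)) (J : A → Prop) : Prop :=
  (∀ F ∈ Γ, (F.reduct J).sat J) ∧
    ∀ K : A → Prop, (∀ F ∈ Γ, (F.reduct J).sat K) → (∀ a, K a → J a) → ∀ a, J a ↔ K a

/-- The atoms of the propositional signature `σ^prop`: expressions `c(v)` for a
constant `c` and a value `v ∈ Dom c`. -/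
abbrev PAtom {σ V : Type} (Dom : σ → Finset V) : Type := {p : σ × V // p.2 ∈ Dom p.1}

/-- The translation `F^prop`, replacing each multi-valued atom `c=v` by the
propositional atom `c(v)`. -/
def MVF.toProp {σ V : Type} [DecidableEq V] (Dom : σ → Finset V) :
    MVF σ V → PF (PAtom Dom)
  | .bot => .bot
  | .atom c v => if h : v ∈ Dom c then .atom ⟨(c, v), h⟩ else .bot
  | .and F G => .and (F.toProp Dom) (G.toProp Dom)
  | .or F G => .or (F.toProp Dom) (G.toProp Dom)
  | .imp F G => .imp (F.toProp Dom) (G.toProp Dom)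

/-- The translation `I^prop` of a multi-valued interpretation: it makes the
propositional atom `c(v)` true iff `I(c) = v`. -/
def toPropInterp {σ V : Type} (Dom : σ → Finset V) (I : σ → V) : PAtom Dom → Prop :=
  fun p => I p.1.1 = p.1.2

/-- Conjunction of a list of propositional formulas. -/
def listConj {A : Type} : List (PF A) → PF A
  | [] => .imp .bot .bot
  | F :: Fs => .and F (listConj Fs)

/-- Disjunction of a list of propositional formulas. -/
def listDisj {A : Type} : List (PF A) → PF A
  | [] => .bot
  | F :: Fs => .or F (listDisj Fs)

/-- The existence and uniqueness constraint `UEC(c)`: the conjunction of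
`⊥ ← c(v) ∧ c(v')` for all distinct `v, v' ∈ Dom c` together with
`⊥ ← ¬⋁_{v ∈ Dom c} c(v)`. -/
noncomputable def UECc {σ V : Type} [DecidableEq V] (Dom : σ → Finset V) (c : σ) : PF (PAtom Dom) :=
  .and
    (listConj ((Dom c).attach.toList.flatMap fun v =>
      (Dom c).attach.toList.filterMap fun w =>
        if v.1 = w.1 then none
        else some (.imp (.and (.atom ⟨(c, v.1), v.2⟩) (.atom ⟨(c, w.1), w.2⟩)) .bot)))
    (.imp (PF.neg (listDisj ((Dom c).attach.toList.map fun v =>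
      PF.atom ⟨(c, v.1), v.2⟩))) .bot)

/-- `UEC_σ`: the conjunction of `UEC(c)` over all constants `c` of the signature. -/
noncomputable def UECsig {σ V : Type} [Fintype σ] [DecidableEq V] (Dom : σ → Finset V) :
    PF (PAtom Dom) :=
  listConj ((Finset.univ : Finset σ).toList.map (UECc Dom))
/-! Action language C+ : signatures, causal laws, the translation `cplus2mvpf`,
and the incremental program components B, P[t], Q[t]. -/

/-- The kinds of constants of a C+ signature: fluent constants are partitioned
into simple and statically determined ones; the remaining constants are action
constants. -/
inductive ConstKind : Type where
  | simpleFluent : ConstKind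
  | statDetFluent : ConstKind
  | action : ConstKind
  deriving DecidableEq

/-- Whether a kind of constant is a fluent constant. -/
def ConstKind.isFluent : ConstKind → Bool
  | .simpleFluent => true
  | .statDetFluent => true
  | .action => false

/-- A C+ signature: a multi-valued signature (constants `σ` with nonempty finite
domains) partitioned into simple fluent, statically determined fluent, and action
constants. -/
structure CPlusSig (σ V : Type) where
  kind : σ → ConstKind
  Dom : σ → Finset V
  dom_nonempty : ∀ c, (Dom c).Nonempty

variable {σ V : Type}

/-- A fluent formula: all constants occurring in it are fluent constants. -/
def isFluentFormula (S : CPlusSig σ V) (F : MVF σ V) : Prop :=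
  ∀ c ∈ F.consts, (S.kind c).isFluent = true

/-- An action formula: it contains at least one action constant and no fluent
constants. -/
def isActionFormula (S : CPlusSig σ V) (F : MVF σ V) : Prop :=
  (∃ c ∈ F.consts, S.kind c = .action) ∧ ∀ c ∈ F.consts, S.kind c = .action

/-- Causal laws: static laws `caused F if G`, action dynamic laws `caused F if G`,
and fluent dynamic laws `caused F if G after H`. -/
inductive CausalLaw (σ V : Type) : Type where
  | static : MVF σ V → MVF σ V → CausalLaw σ V
  | actionDyn : MVF σ V → MVF σ V → CausalLaw σ V
  | fluentDyn : MVF σ V → MVF σ V → MVF σ V → CausalLaw σ V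
  deriving DecidableEq

/-- Well-formedness of a causal law with respect to a C+ signature: in a static law
`caused F if G`, `F` and `G` are fluent formulas; in an action dynamic law
`caused F if G`, `F` is an action formula and `G` is any formula; in a fluent
dynamic law `caused F if G after H`, `F` and `G` are fluent formulas, `F` contains
no statically determined constants, and `H` is any formula. -/
def CausalLaw.wf (S : CPlusSig σ V) : CausalLaw σ V → Prop
  | .static F G => F.wf S.Dom ∧ G.wf S.Dom ∧ isFluentFormula S F ∧ isFluentFormula S G
  | .actionDyn F G => F.wf S.Dom ∧ G.wf S.Dom ∧ isActionFormula S F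
  | .fluentDyn F G H => F.wf S.Dom ∧ G.wf S.Dom ∧ H.wf S.Dom ∧
      isFluentFormula S F ∧ isFluentFormula S G ∧
      ∀ c ∈ F.consts, S.kind c ≠ .statDetFluent

/-- The head `F` of a causal law. -/
def CausalLaw.head : CausalLaw σ V → MVF σ V
  | .static F _ => F
  | .actionDyn F _ => F
  | .fluentDyn F _ _ => F

/-- A formula is an atom or `⊥`. -/
def MVF.isAtomOrBot : MVF σ V → Prop
  | .bot => True
  | .atom _ _ => True
  | _ => False

/-- An action description (a finite set of causal laws) is definite if the head of
every law is an atom or `⊥`. -/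
def definite [DecidableEq σ] [DecidableEq V] (D : Finset (CausalLaw σ V)) : Prop :=
  ∀ l ∈ D, l.head.isAtomOrBot

/-- The valid time-stamped constants `i:c` of the signature of `cplus2mvpf(D,m)`:
`i ∈ {0,…,m}` for fluent constants and `i ∈ {0,…,m−1}` for action constants. -/
def validTC (S : CPlusSig σ V) (m : ℕ) (p : ℕ × σ) : Prop :=
  ((S.kind p.2).isFluent = true ∧ p.1 ≤ m) ∨ (S.kind p.2 = .action ∧ p.1 + 1 ≤ m)

instance (S : CPlusSig σ V) (m : ℕ) (p : ℕ × σ) : Decidable (validTC S m p) := by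
  unfold validTC; infer_instance

/-- The time-stamped constants of the signature of `cplus2mvpf(D,m)`. -/
abbrev TSC (S : CPlusSig σ V) (m : ℕ) : Type := {p : ℕ × σ // validTC S m p}

/-- The domain of a time-stamped constant `i:c` is the domain of `c`. -/
def tcDom (S : CPlusSig σ V) (m : ℕ) : TSC S m → Finset V := fun p => S.Dom p.1.2

/-- Replace every atom of a formula by a formula. -/
def MVF.mapAtoms {σ' : Type} (f : σ → V → MVF σ' V) : MVF σ V → MVF σ' V
  | .bot => .bot
  | .atom c v => f c v
  | .and F G => .and (F.mapAtoms f) (G.mapAtoms f)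
  | .or F G => .or (F.mapAtoms f) (G.mapAtoms f)
  | .imp F G => .imp (F.mapAtoms f) (G.mapAtoms f)

/-- `i:F`: insert `i:` in front of every occurrence of every constant in `F`. -/
def stamp (S : CPlusSig σ V) (m i : ℕ) (F : MVF σ V) : MVF (TSC S m) V :=
  F.mapAtoms fun c v => if h : validTC S m (i, c) then .atom ⟨(i, c), h⟩ v else .bot

/-- The multi-valued propositional theory `cplus2mvpf(D,m)`: the rules
`i:F ← ¬¬(i:G)` for every static law and `i ∈ {0,…,m}` and for every action
dynamic law and `i ∈ {0,…,m−1}`; `i:F ← ¬¬(i:G) ∧ (i−1:H)` for every fluent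
dynamic law and `i ∈ {1,…,m}`; and `0:c=v ← ¬¬(0:c=v)` for every simple fluent
constant `c` and every `v ∈ Dom(c)`. -/
def cplus2mvpf [DecidableEq σ] [DecidableEq V]
    (S : CPlusSig σ V) (D : Finset (CausalLaw σ V)) (m : ℕ) : Set (MVF (TSC S m) V) :=
  { R | (∃ F G, CausalLaw.static F G ∈ D ∧ ∃ i ≤ m,
           R = .imp ((stamp S m i G).neg.neg) (stamp S m i F))
      ∨ (∃ F G, CausalLaw.actionDyn F G ∈ D ∧ ∃ i, i + 1 ≤ m ∧
           R = .imp ((stamp S m i G).neg.neg) (stamp S m i F))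
      ∨ (∃ F G H, CausalLaw.fluentDyn F G H ∈ D ∧ ∃ i, 1 ≤ i ∧ i ≤ m ∧
           R = .imp (.and ((stamp S m i G).neg.neg) (stamp S m (i - 1) H)) (stamp S m i F))
      ∨ (∃ c, S.kind c = .simpleFluent ∧ ∃ v ∈ S.Dom c,
           R = .imp ((stamp S m 0 (.atom c v)).neg.neg) (stamp S m 0 (.atom c v))) }

/-- The base component `B` of the incremental logic program: `0:UEC(f)` for every
fluent constant `f`; `0:c(v) ← ¬¬(0:c(v))` for every simple fluent `c` and
`v ∈ Dom(c)`; and `0:F^prop ← ¬¬(0:G^prop)` for every static law of `D`. -/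
def Bcomp [DecidableEq σ] [DecidableEq V]
    (S : CPlusSig σ V) (D : Finset (CausalLaw σ V)) (m : ℕ) :
    Set (PF (PAtom (tcDom S m))) :=
  { R | (∃ tc : TSC S m, tc.1.1 = 0 ∧ (S.kind tc.1.2).isFluent = true ∧
           R = UECc (tcDom S m) tc)
      ∨ (∃ c, S.kind c = .simpleFluent ∧ ∃ v ∈ S.Dom c,
           R = .imp (((stamp S m 0 (.atom c v)).toProp (tcDom S m)).neg.neg)
                    ((stamp S m 0 (.atom c v)).toProp (tcDom S m)))
      ∨ (∃ F G, CausalLaw.static F G ∈ D ∧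
           R = .imp (((stamp S m 0 G).toProp (tcDom S m)).neg.neg)
                    ((stamp S m 0 F).toProp (tcDom S m))) }

/-- The cumulative component `P[t]` (for `t ≥ 1`): `t:UEC(f)` for every fluent
constant `f`; `(t−1):UEC(a)` for every action constant `a`;
`t:F^prop ← ¬¬(t:G^prop)` for every static law;
`(t−1):F^prop ← ¬¬((t−1):G^prop)` for every action dynamic law; and
`t:F^prop ← ¬¬(t:G^prop) ∧ ((t−1):H^prop)` for every fluent dynamic law of `D`. -/
def Pcomp [DecidableEq σ] [DecidableEq V]
    (S : CPlusSig σ V) (D : Finset (CausalLaw σ V)) (m t : ℕ) :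
    Set (PF (PAtom (tcDom S m))) :=
  { R | (∃ tc : TSC S m, tc.1.1 = t ∧ (S.kind tc.1.2).isFluent = true ∧
           R = UECc (tcDom S m) tc)
      ∨ (∃ tc : TSC S m, tc.1.1 = t - 1 ∧ S.kind tc.1.2 = .action ∧
           R = UECc (tcDom S m) tc)
      ∨ (∃ F G, CausalLaw.static F G ∈ D ∧
           R = .imp (((stamp S m t G).toProp (tcDom S m)).neg.neg)
                    ((stamp S m t F).toProp (tcDom S m)))
      ∨ (∃ F G, CausalLaw.actionDyn F G ∈ D ∧
           R = .imp (((stamp S m (t - 1) G).toProp (tcDom S m)).neg.neg)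
                    ((stamp S m (t - 1) F).toProp (tcDom S m)))
      ∨ (∃ F G H, CausalLaw.fluentDyn F G H ∈ D ∧
           R = .imp (.and (((stamp S m t G).toProp (tcDom S m)).neg.neg)
                          ((stamp S m (t - 1) H).toProp (tcDom S m)))
                    ((stamp S m t F).toProp (tcDom S m))) }

/-- The volatile query component `Q[t]` for a query `F`: the single constraint
`⊥ ← ¬(F)^prop`. -/
def Qcomp [DecidableEq V] (S : CPlusSig σ V) (m : ℕ) (Fq : MVF (TSC S m) V) :
    Set (PF (PAtom (tcDom S m))) :=
  {PF.imp ((Fq.toProp (tcDom S m)).neg) PF.bot}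

section AuxPF
variable {A : Type}

theorem PF.sat_congr {J K : A → Prop} (h : ∀ a, J a ↔ K a) :
    ∀ F : PF A, F.sat J ↔ F.sat K := by
  intro F; induction F with
  | bot => exact Iff.rfl
  | atom a => exact h a
  | and F G ihF ihG => exact and_congr ihF ihG
  | or F G ihF ihG => exact or_congr ihF ihG
  | imp F G ihF ihG => exact imp_congr ihF ihG

theorem PF.reduct_sat_self (J : A → Prop) :
    ∀ F : PF A, (F.reduct J).sat J ↔ F.sat J := by
  intro F; induction F with
  | bot => exact Iff.rfl
  | atom a =>
      by_cases h : J a <;> simp [PF.reduct, h, PF.sat]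
  | and F G ihF ihG =>
      by_cases h : (PF.and F G).sat J
      · rw [PF.reduct, if_pos h]
        simpa [PF.sat, ihF, ihG] using iff_of_true h h
      · rw [PF.reduct, if_neg h]
        exact iff_of_false (fun h' => h'.elim) h
  | or F G ihF ihG =>
      by_cases h : (PF.or F G).sat J
      · rw [PF.reduct, if_pos h]
        show (F.reduct J).sat J ∨ (G.reduct J).sat J ↔ _
        rw [ihF, ihG]; exact Iff.rfl
      · rw [PF.reduct, if_neg h]
        exact iff_of_false (fun h' => h') h
  | imp F G ihF ihG =>
      by_cases h : (PF.imp F G).sat J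
      · rw [PF.reduct, if_pos h]
        show ((F.reduct J).sat J → (G.reduct J).sat J) ↔ _
        rw [ihF, ihG]; exact Iff.rfl
      · rw [PF.reduct, if_neg h]
        exact iff_of_false (fun h' => h') h

theorem sat_listConj (J : A → Prop) :
    ∀ L : List (PF A), (listConj L).sat J ↔ ∀ F ∈ L, F.sat J := by
  intro L; induction L with
  | nil => simp [listConj, PF.sat]
  | cons F L ih => simp [listConj, PF.sat, ih]

theorem sat_listDisj (J : A → Prop) :
    ∀ L : List (PF A), (listDisj L).sat J ↔ ∃ F ∈ L, F.sat J := by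
  intro L; induction L with
  | nil => simp [listDisj, PF.sat]
  | cons F L ih => simp [listDisj, PF.sat, ih]

theorem listConj_reduct_sat (J K : A → Prop) :
    ∀ L : List (PF A), (∀ F ∈ L, F.sat J) → (∀ F ∈ L, (F.reduct J).sat K) →
      ((listConj L).reduct J).sat K := by
  intro L; induction L with
  | nil =>
      intro _ _
      show ((PF.imp .bot .bot).reduct J).sat K
      simp [PF.reduct, PF.sat]
  | cons F L ih =>
      intro h1 h2
      have hs : (PF.and F (listConj L)).sat J := by
        have := (sat_listConj J (F :: L)).mpr h1
        exact this
      show ((PF.and F (listConj L)).reduct J).sat K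
      rw [PF.reduct, if_pos hs]
      exact ⟨h2 F (by simp), ih (fun G hG => h1 G (by simp [hG]))
        (fun G hG => h2 G (by simp [hG]))⟩

end AuxPF
section AuxMVF
variable {σ V : Type} [DecidableEq V] {Dom : σ → Finset V}

theorem MVF.wf_reduct (I : σ → V) :
    ∀ F : MVF σ V, F.wf Dom → (F.reduct I).wf Dom := by
  intro F; induction F with
  | bot => intro _; trivial
  | atom c v =>
      intro h
      by_cases hc : I c = v <;> simp [MVF.reduct, hc, MVF.wf, h]
  | and F G ihF ihG =>
      intro h
      by_cases hs : (MVF.and F G).sat I <;>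
        simp [MVF.reduct, hs, MVF.wf, ihF h.1, ihG h.2]
  | or F G ihF ihG =>
      intro h
      by_cases hs : (MVF.or F G).sat I <;>
        simp [MVF.reduct, hs, MVF.wf, ihF h.1, ihG h.2]
  | imp F G ihF ihG =>
      intro h
      by_cases hs : (MVF.imp F G).sat I <;>
        simp [MVF.reduct, hs, MVF.wf, ihF h.1, ihG h.2]

theorem sat_toProp (I : σ → V) :
    ∀ F : MVF σ V, F.wf Dom →
      (F.sat I ↔ (F.toProp Dom).sat (toPropInterp Dom I)) := by
  intro F; induction F with
  | bot => intro _; exact Iff.rfl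
  | atom c v =>
      intro h
      have hv : v ∈ Dom c := h
      simp [MVF.toProp, hv, MVF.sat, PF.sat, toPropInterp]
  | and F G ihF ihG => intro h; exact and_congr (ihF h.1) (ihG h.2)
  | or F G ihF ihG => intro h; exact or_congr (ihF h.1) (ihG h.2)
  | imp F G ihF ihG => intro h; exact imp_congr (ihF h.1) (ihG h.2)

theorem reduct_toProp (I : σ → V) :
    ∀ F : MVF σ V, F.wf Dom →
      (F.reduct I).toProp Dom = (F.toProp Dom).reduct (toPropInterp Dom I) := by
  intro F; induction F with
  | bot => intro _; rfl
  | atom c v =>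
      intro h
      have hv : v ∈ Dom c := h
      by_cases hc : I c = v <;>
        simp [MVF.reduct, MVF.toProp, hc, hv, PF.reduct, toPropInterp]
  | and F G ihF ihG =>
      intro h
      have hsat : (MVF.and F G).sat I ↔
          ((MVF.and F G).toProp Dom).sat (toPropInterp Dom I) :=
        sat_toProp I _ h
      by_cases hs : (MVF.and F G).sat I
      · rw [MVF.reduct, if_pos hs]
        show MVF.toProp Dom (.and _ _) = _
        rw [show (MVF.and F G).toProp Dom = PF.and (F.toProp Dom) (G.toProp Dom) from rfl,
          PF.reduct, if_pos (by exact hsat.mp hs)]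
        simp [MVF.toProp, ihF h.1, ihG h.2]
      · rw [MVF.reduct, if_neg hs]
        rw [show (MVF.and F G).toProp Dom = PF.and (F.toProp Dom) (G.toProp Dom) from rfl,
          PF.reduct, if_neg (by exact fun hh => hs (hsat.mpr hh))]
        rfl
  | or F G ihF ihG =>
      intro h
      have hsat : (MVF.or F G).sat I ↔
          ((MVF.or F G).toProp Dom).sat (toPropInterp Dom I) :=
        sat_toProp I _ h
      by_cases hs : (MVF.or F G).sat I
      · rw [MVF.reduct, if_pos hs]
        rw [show (MVF.or F G).toProp Dom = PF.or (F.toProp Dom) (G.toProp Dom) from rfl,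
          PF.reduct, if_pos (by exact hsat.mp hs)]
        simp [MVF.toProp, ihF h.1, ihG h.2]
      · rw [MVF.reduct, if_neg hs]
        rw [show (MVF.or F G).toProp Dom = PF.or (F.toProp Dom) (G.toProp Dom) from rfl,
          PF.reduct, if_neg (by exact fun hh => hs (hsat.mpr hh))]
        rfl
  | imp F G ihF ihG =>
      intro h
      have hsat : (MVF.imp F G).sat I ↔
          ((MVF.imp F G).toProp Dom).sat (toPropInterp Dom I) :=
        sat_toProp I _ h
      by_cases hs : (MVF.imp F G).sat I
      · rw [MVF.reduct, if_pos hs]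
        rw [show (MVF.imp F G).toProp Dom = PF.imp (F.toProp Dom) (G.toProp Dom) from rfl,
          PF.reduct, if_pos (by exact hsat.mp hs)]
        simp [MVF.toProp, ihF h.1, ihG h.2]
      · rw [MVF.reduct, if_neg hs]
        rw [show (MVF.imp F G).toProp Dom = PF.imp (F.toProp Dom) (G.toProp Dom) from rfl,
          PF.reduct, if_neg (by exact fun hh => hs (hsat.mpr hh))]
        rfl

/-- the "intersection" interpretation `I^prop ⊓ J^prop`. -/
def meetI (Dom : σ → Finset V) (I J : σ → V) : PAtom Dom → Prop :=
  fun a => I a.1.1 = a.1.2 ∧ J a.1.1 = a.1.2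

theorem reduct_sat_meet (I J : σ → V) :
    ∀ F : MVF σ V, F.wf Dom →
      ((F.reduct I).sat J ↔ ((F.reduct I).toProp Dom).sat (meetI Dom I J)) := by
  intro F; induction F with
  | bot => intro _; exact Iff.rfl
  | atom c v =>
      intro h
      have hv : v ∈ Dom c := h
      by_cases hc : I c = v
      · simp [MVF.reduct, hc, MVF.toProp, hv, MVF.sat, PF.sat, meetI]
      · simp [MVF.reduct, hc, MVF.toProp, MVF.sat, PF.sat]
  | and F G ihF ihG =>
      intro h
      by_cases hs : (MVF.and F G).sat I
      · rw [MVF.reduct, if_pos hs]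
        exact and_congr (ihF h.1) (ihG h.2)
      · rw [MVF.reduct, if_neg hs]; exact Iff.rfl
  | or F G ihF ihG =>
      intro h
      by_cases hs : (MVF.or F G).sat I
      · rw [MVF.reduct, if_pos hs]
        exact or_congr (ihF h.1) (ihG h.2)
      · rw [MVF.reduct, if_neg hs]; exact Iff.rfl
  | imp F G ihF ihG =>
      intro h
      by_cases hs : (MVF.imp F G).sat I
      · rw [MVF.reduct, if_pos hs]
        exact imp_congr (ihF h.1) (ihG h.2)
      · rw [MVF.reduct, if_neg hs]; exact Iff.rfl

end AuxMVF
section AuxUEC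
variable {σ V : Type} [DecidableEq V] {Dom : σ → Finset V}

theorem sat_UECc_iff (J : PAtom Dom → Prop) (c : σ) :
    (UECc Dom c).sat J ↔
      ((∀ v (hv : v ∈ Dom c) w (hw : w ∈ Dom c), v ≠ w →
          ¬(J ⟨(c, v), hv⟩ ∧ J ⟨(c, w), hw⟩)) ∧
        ∃ v, ∃ hv : v ∈ Dom c, J ⟨(c, v), hv⟩) := by
  show ((listConj _).sat J ∧ (PF.imp (PF.neg (listDisj _)) .bot).sat J) ↔ _
  constructor
  · rintro ⟨h1, h2⟩
    constructor
    · intro v hv w hw hne hJ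
      have hmem : (PF.imp (PF.and (PF.atom (⟨(c, v), hv⟩ : PAtom Dom))
            (PF.atom (⟨(c, w), hw⟩ : PAtom Dom))) PF.bot) ∈
          ((Dom c).attach.toList.flatMap fun v =>
            (Dom c).attach.toList.filterMap fun w =>
              if v.1 = w.1 then none
              else some (PF.imp (PF.and (PF.atom (⟨(c, v.1), v.2⟩ : PAtom Dom))
                (PF.atom (⟨(c, w.1), w.2⟩ : PAtom Dom))) PF.bot)) := by
        rw [List.mem_flatMap]
        refine ⟨⟨v, hv⟩, by simp, ?_⟩
        rw [List.mem_filterMap]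
        exact ⟨⟨w, hw⟩, by simp, by rw [if_neg hne]⟩
      have := (sat_listConj J _).mp h1 _ hmem
      exact this hJ
    · by_contra hne
      push_neg at hne
      apply h2
      intro hdisj
      rcases (sat_listDisj J _).mp hdisj with ⟨F, hF, hFs⟩
      rw [List.mem_map] at hF
      rcases hF with ⟨⟨v, hv⟩, _, rfl⟩
      exact hne v hv hFs
  · rintro ⟨h1, h2⟩
    constructor
    · rw [sat_listConj]
      intro F hF
      rw [List.mem_flatMap] at hF
      rcases hF with ⟨⟨v, hv⟩, _, hF⟩
      rw [List.mem_filterMap] at hF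
      rcases hF with ⟨⟨w, hw⟩, _, hF⟩
      by_cases hvw : v = w
      · rw [if_pos hvw] at hF; cases hF
      · rw [if_neg hvw] at hF
        cases hF
        exact fun hJ => h1 v hv w hw hvw hJ
    · intro hnd
      apply hnd
      rw [sat_listDisj]
      rcases h2 with ⟨v, hv, hJ⟩
      exact ⟨.atom ⟨(c, v), hv⟩, List.mem_map.mpr ⟨⟨v, hv⟩, by simp, rfl⟩, hJ⟩

theorem UEC_sat_interp (I : σ → V) (hI : isInterp Dom I) (c : σ) :
    (UECc Dom c).sat (toPropInterp Dom I) := by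
  rw [sat_UECc_iff]
  constructor
  · rintro v hv w hw hne ⟨h1, h2⟩
    exact hne (h1.symm.trans h2)
  · exact ⟨I c, hI c, rfl⟩

theorem PF.reduct_of_not_sat {A' : Type} (J : A' → Prop) (F : PF A') (h : ¬ F.sat J) :
    F.reduct J = .bot := by
  cases F with
  | bot => rfl
  | atom a => rw [PF.reduct, if_neg (show ¬ J a from h)]
  | and F G => rw [PF.reduct, if_neg h]
  | or F G => rw [PF.reduct, if_neg h]
  | imp F G => rw [PF.reduct, if_neg h]

theorem reduct_imp_bot_sat (J K : PAtom Dom → Prop) (A : PF (PAtom Dom)) (h : ¬ A.sat J) :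
    ((PF.imp A .bot).reduct J).sat K := by
  rw [PF.reduct, if_pos (show (PF.imp A .bot).sat J from fun hb => absurd hb h),
    PF.reduct_of_not_sat J A h]
  exact fun hb => hb

theorem UEC_reduct_sat (I : σ → V) (hI : isInterp Dom I) (c : σ) (K : PAtom Dom → Prop) :
    ((UECc Dom c).reduct (toPropInterp Dom I)).sat K := by
  have hUsat := UEC_sat_interp I hI c
  unfold UECc at hUsat ⊢
  rw [PF.reduct, if_pos hUsat]
  rcases hUsat with ⟨h1, h2⟩
  constructor
  · -- listConj part
    apply listConj_reduct_sat
    · exact (sat_listConj _ _).mp h1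
    · intro F hF
      rw [List.mem_flatMap] at hF
      rcases hF with ⟨⟨v, hv⟩, _, hF⟩
      rw [List.mem_filterMap] at hF
      rcases hF with ⟨⟨w, hw⟩, _, hF⟩
      by_cases hvw : v = w
      · rw [if_pos hvw] at hF; cases hF
      · rw [if_neg hvw] at hF
        cases hF
        have hbody : ¬ (PF.and (.atom ⟨(c, v), hv⟩) (.atom ⟨(c, w), hw⟩)).sat
            (toPropInterp Dom I) := by
          rintro ⟨hx, hy⟩
          exact hvw ((hx.symm.trans hy : (v : V) = w))
        exact reduct_imp_bot_sat _ K _ hbody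
  · -- existence part
    have hdisj : (listDisj ((Dom c).attach.toList.map fun v =>
        PF.atom (⟨(c, v.1), v.2⟩ : PAtom Dom))).sat (toPropInterp Dom I) := by
      rw [sat_listDisj]
      exact ⟨.atom ⟨(c, I c), hI c⟩, List.mem_map.mpr ⟨⟨I c, hI c⟩, by simp, rfl⟩, rfl⟩
    have hneg : ¬ (PF.neg (listDisj ((Dom c).attach.toList.map fun v =>
        PF.atom (⟨(c, v.1), v.2⟩ : PAtom Dom)))).sat (toPropInterp Dom I) :=
      fun hn => hn hdisj
    exact reduct_imp_bot_sat _ K _ hneg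

end AuxUEC
section AuxBL
variable {σ V : Type} [DecidableEq V]

/-- The propositional program corresponding to an MV program Γ: all UECs plus
the translations of formulas of Γ. -/
def propProg (Dom : σ → Finset V) (Γ : Set (MVF σ V)) : Set (PF (PAtom Dom)) :=
  {R | ∃ c, R = UECc Dom c} ∪ (fun F => F.toProp Dom) '' Γ

theorem BL_A (Dom : σ → Finset V) (hdom : ∀ c, 2 ≤ (Dom c).card)
    (Γ : Set (MVF σ V)) (hΓ : ∀ F ∈ Γ, F.wf Dom)
    (I : σ → V) (hI : isInterp Dom I) :
    isMVStableSet Dom Γ I ↔ isPStableSet (propProg Dom Γ) (toPropInterp Dom I) := by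
  constructor
  · rintro ⟨-, hsat, hmin⟩
    constructor
    · rintro R (⟨c, rfl⟩ | ⟨F, hF, rfl⟩)
      · exact UEC_reduct_sat I hI c _
      · rw [← reduct_toProp I F (hΓ F hF)]
        exact (sat_toProp I _ (MVF.wf_reduct I F (hΓ F hF))).mp (hsat F hF)
    · intro K hK hKsub
      -- build the MV interpretation J from K
      have halt : ∀ c, ∃ v ∈ Dom c, v ≠ I c := fun c =>
        Finset.exists_mem_ne (lt_of_lt_of_le one_lt_two (hdom c)) (I c)
      choose alt haltmem haltne using halt
      classical
      set J : σ → V := fun c => if K ⟨(c, I c), hI c⟩ then I c else alt c with hJdef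
      have hJval : ∀ c, (J c = I c ↔ K ⟨(c, I c), hI c⟩) := by
        intro c
        by_cases hk : K ⟨(c, I c), hI c⟩
        · simp [hJdef, hk]
        · simp [hJdef, hk, haltne c]
      have hiff : ∀ a, K a ↔ meetI Dom I J a := by
        rintro ⟨⟨c, v⟩, hv⟩
        constructor
        · intro hKa
          have h1 : I c = v := hKsub _ hKa
          have heq : (⟨(c, v), hv⟩ : PAtom Dom) = ⟨(c, I c), hI c⟩ :=
            Subtype.ext (by simp [h1])
          have : K ⟨(c, I c), hI c⟩ := heq ▸ hKa
          exact ⟨h1, by rw [(hJval c).mpr this, h1]⟩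
        · rintro ⟨h1, h2⟩
          have : K ⟨(c, I c), hI c⟩ := (hJval c).mp (h2.trans h1.symm)
          have heq : (⟨(c, v), hv⟩ : PAtom Dom) = ⟨(c, I c), hI c⟩ :=
            Subtype.ext (by simp [h1])
          exact heq ▸ this
      have hJinterp : isInterp Dom J := by
        intro c
        by_cases hk : K ⟨(c, I c), hI c⟩ <;> simp [hJdef, hk, hI c, haltmem c]
      have hJsat : ∀ F ∈ Γ, (F.reduct I).sat J := by
        intro F hF
        have h1 := hK (F.toProp Dom) (Or.inr ⟨F, hF, rfl⟩)
        rw [← reduct_toProp I F (hΓ F hF)] at h1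
        have h2 := (PF.sat_congr hiff _).mp h1
        exact (reduct_sat_meet I J F (hΓ F hF)).mpr h2
      have hJI : J = I := hmin J hJinterp hJsat
      intro a
      constructor
      · rintro hIa
        obtain ⟨⟨c, v⟩, hv⟩ := a
        have h1 : I c = v := hIa
        have hk : K ⟨(c, I c), hI c⟩ := (hJval c).mp (by rw [hJI])
        have heq : (⟨(c, v), hv⟩ : PAtom Dom) = ⟨(c, I c), hI c⟩ :=
          Subtype.ext (by simp [h1])
        exact heq ▸ hk
      · exact hKsub a
  · rintro ⟨hsat, hmin⟩
    refine ⟨hI, ?_, ?_⟩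
    · intro F hF
      have h1 := hsat (F.toProp Dom) (Or.inr ⟨F, hF, rfl⟩)
      rw [← reduct_toProp I F (hΓ F hF)] at h1
      exact (sat_toProp I _ (MVF.wf_reduct I F (hΓ F hF))).mpr h1
    · intro J hJinterp hJsat
      have hKsat : ∀ R ∈ propProg Dom Γ, (R.reduct (toPropInterp Dom I)).sat (meetI Dom I J) := by
        rintro R (⟨c, rfl⟩ | ⟨F, hF, rfl⟩)
        · exact UEC_reduct_sat I hI c _
        · rw [← reduct_toProp I F (hΓ F hF)]
          exact (reduct_sat_meet I J F (hΓ F hF)).mp (hJsat F hF)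
      have hiff := hmin (meetI Dom I J) hKsat (fun a ha => ha.1)
      funext c
      exact ((hiff ⟨(c, I c), hI c⟩).mp rfl).2

theorem BL_B (Dom : σ → Finset V) (hdom : ∀ c, 2 ≤ (Dom c).card)
    (Γ : Set (MVF σ V)) (hΓ : ∀ F ∈ Γ, F.wf Dom)
    (J : PAtom Dom → Prop) :
    isPStableSet (propProg Dom Γ) J ↔
      ∃ I, isMVStableSet Dom Γ I ∧ J = toPropInterp Dom I := by
  constructor
  · intro hJ
    have hU : ∀ c : σ, (UECc Dom c).sat J := fun c =>
      (PF.reduct_sat_self J _).mp (hJ.1 (UECc Dom c) (Or.inl ⟨c, rfl⟩))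
    have hU' := fun c => (sat_UECc_iff J c).mp (hU c)
    choose I hImem hIJ using fun c => (hU' c).2
    have hEq : J = toPropInterp Dom I := by
      funext a
      obtain ⟨⟨c, v⟩, hv⟩ := a
      apply propext
      constructor
      · intro hJa
        by_contra hne
        exact (hU' c).1 v hv (I c) (hImem c) (fun h => hne h.symm) ⟨hJa, hIJ c⟩
      · intro hIv
        have h1 : I c = v := hIv
        subst h1
        exact hIJ c
    refine ⟨I, ?_, hEq⟩
    rw [BL_A Dom hdom Γ hΓ I hImem, ← hEq]
    exact hJ
  · rintro ⟨I, hMV, rfl⟩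
    exact (BL_A Dom hdom Γ hΓ I hMV.1).mp hMV

end AuxBL
section AuxMain
variable {σ V : Type} [DecidableEq σ] [DecidableEq V]

theorem stamp_wf (S : CPlusSig σ V) (m i : ℕ) :
    ∀ F : MVF σ V, F.wf S.Dom → (stamp S m i F).wf (tcDom S m) := by
  intro F
  induction F with
  | bot => intro _; trivial
  | atom c v =>
      intro hF
      show MVF.wf _ (if h : validTC S m (i, c) then MVF.atom (⟨(i, c), h⟩ : TSC S m) v else MVF.bot)
      split
      · exact hF
      · trivial
  | and F G ihF ihG => intro hF; exact ⟨ihF hF.1, ihG hF.2⟩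
  | or F G ihF ihG => intro hF; exact ⟨ihF hF.1, ihG hF.2⟩
  | imp F G ihF ihG => intro hF; exact ⟨ihF hF.1, ihG hF.2⟩

theorem cplus2mvpf_wf (S : CPlusSig σ V) (D : Finset (CausalLaw σ V))
    (hwf : ∀ l ∈ D, l.wf S) (m : ℕ) :
    ∀ F ∈ cplus2mvpf S D m, F.wf (tcDom S m) := by
  rintro R (⟨F, G, hD, i, hi, rfl⟩ | ⟨F, G, hD, i, hi, rfl⟩ |
    ⟨F, G, H, hD, i, h1, h2, rfl⟩ | ⟨c, hc, v, hv, rfl⟩)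
  · obtain ⟨hF, hG, -⟩ := hwf _ hD
    exact ⟨⟨⟨stamp_wf S m i G hG, trivial⟩, trivial⟩, stamp_wf S m i F hF⟩
  · obtain ⟨hF, hG, -⟩ := hwf _ hD
    exact ⟨⟨⟨stamp_wf S m i G hG, trivial⟩, trivial⟩, stamp_wf S m i F hF⟩
  · obtain ⟨hF, hG, hH, -⟩ := hwf _ hD
    exact ⟨⟨⟨⟨stamp_wf S m i G hG, trivial⟩, trivial⟩, stamp_wf S m (i - 1) H hH⟩,
      stamp_wf S m i F hF⟩
  · exact ⟨⟨⟨stamp_wf S m 0 _ hv, trivial⟩, trivial⟩, stamp_wf S m 0 _ hv⟩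

theorem prog_eq (S : CPlusSig σ V) (D : Finset (CausalLaw σ V)) (k : ℕ)
    (Fq : MVF (TSC S k) V) :
    Bcomp S D k ∪ (⋃ t ∈ Finset.Icc 1 k, Pcomp S D k t) ∪ Qcomp S k Fq
      = propProg (tcDom S k) (cplus2mvpf S D k ∪ {MVF.imp Fq.neg MVF.bot}) := by
  ext R
  simp only [propProg, Set.mem_union, Set.mem_iUnion, Set.mem_image, Set.mem_setOf_eq,
    Set.mem_singleton_iff, Finset.mem_Icc, cplus2mvpf, Bcomp, Pcomp, Qcomp, exists_prop]
  constructor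
  · rintro ((hB | ⟨t, ⟨ht1, ht2⟩, hP⟩) | rfl)
    · rcases hB with ⟨tc, _, _, rfl⟩ | ⟨c, hc, v, hv, rfl⟩ | ⟨F, G, hD, rfl⟩
      · exact Or.inl ⟨tc, rfl⟩
      · exact Or.inr ⟨MVF.imp ((stamp S k 0 (.atom c v)).neg.neg) (stamp S k 0 (.atom c v)),
          Or.inl (Or.inr (Or.inr (Or.inr ⟨c, hc, v, hv, rfl⟩))), rfl⟩
      · exact Or.inr ⟨MVF.imp ((stamp S k 0 G).neg.neg) (stamp S k 0 F),
          Or.inl (Or.inl ⟨F, G, hD, 0, Nat.zero_le k, rfl⟩), rfl⟩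
    · rcases hP with ⟨tc, _, _, rfl⟩ | ⟨tc, _, _, rfl⟩ | ⟨F, G, hD, rfl⟩ |
        ⟨F, G, hD, rfl⟩ | ⟨F, G, H, hD, rfl⟩
      · exact Or.inl ⟨tc, rfl⟩
      · exact Or.inl ⟨tc, rfl⟩
      · exact Or.inr ⟨MVF.imp ((stamp S k t G).neg.neg) (stamp S k t F),
          Or.inl (Or.inl ⟨F, G, hD, t, ht2, rfl⟩), rfl⟩
      · refine Or.inr ⟨MVF.imp ((stamp S k (t - 1) G).neg.neg) (stamp S k (t - 1) F),
          Or.inl (Or.inr (Or.inl ⟨F, G, hD, t - 1, ?_, rfl⟩)), rfl⟩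
        omega
      · exact Or.inr ⟨MVF.imp (.and ((stamp S k t G).neg.neg) (stamp S k (t - 1) H))
            (stamp S k t F),
          Or.inl (Or.inr (Or.inr (Or.inl ⟨F, G, H, hD, t, ht1, ht2, rfl⟩))), rfl⟩
    · exact Or.inr ⟨MVF.imp Fq.neg MVF.bot, Or.inr rfl, rfl⟩
  · rintro (⟨c, rfl⟩ | ⟨F, hF | rfl, rfl⟩)
    · obtain ⟨⟨i, a⟩, hval⟩ := c
      rcases hval with ⟨hfl, hik⟩ | ⟨hact, hik⟩
      · rcases Nat.eq_zero_or_pos i with rfl | hpos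
        · exact Or.inl (Or.inl (Or.inl ⟨⟨(0, a), Or.inl ⟨hfl, hik⟩⟩, rfl, hfl, rfl⟩))
        · exact Or.inl (Or.inr ⟨i, ⟨hpos, hik⟩,
            Or.inl ⟨⟨(i, a), Or.inl ⟨hfl, hik⟩⟩, rfl, hfl, rfl⟩⟩)
      · refine Or.inl (Or.inr ⟨i + 1, ⟨Nat.succ_le_succ (Nat.zero_le i), hik⟩,
          Or.inr (Or.inl ⟨⟨(i, a), Or.inr ⟨hact, hik⟩⟩, by simp, hact, rfl⟩)⟩)
    · rcases hF with ⟨F, G, hD, i, hi, rfl⟩ | ⟨F, G, hD, i, hi, rfl⟩ |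
        ⟨F, G, H, hD, i, h1, h2, rfl⟩ | ⟨c, hc, v, hv, rfl⟩
      · rcases Nat.eq_zero_or_pos i with rfl | hpos
        · exact Or.inl (Or.inl (Or.inr (Or.inr ⟨F, G, hD, rfl⟩)))
        · exact Or.inl (Or.inr ⟨i, ⟨hpos, hi⟩, Or.inr (Or.inr (Or.inl ⟨F, G, hD, rfl⟩))⟩)
      · refine Or.inl (Or.inr ⟨i + 1, ⟨Nat.succ_le_succ (Nat.zero_le i), hi⟩,
          Or.inr (Or.inr (Or.inr (Or.inl ⟨F, G, hD, ?_⟩)))⟩)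
        rw [Nat.add_sub_cancel]
        rfl
      · exact Or.inl (Or.inr ⟨i, ⟨h1, h2⟩,
          Or.inr (Or.inr (Or.inr (Or.inr ⟨F, G, H, hD, rfl⟩)))⟩)
      · exact Or.inl (Or.inl (Or.inr (Or.inl ⟨c, hc, v, hv, rfl⟩)))
    · exact Or.inr rfl

end AuxMain
/-- **Correctness of the flattened incremental computation (Theorem 2)**: let
`D` be a definite C+ action description in which every constant has a domain
with at least two elements, let `k` be a nonnegative integer, and let `F(k)` be
a formula of the signature of `cplus2mvpf(D,k)`. A multi-valued interpretation
`I` of the signature of `cplus2mvpf(D,k)` is a multi-valued stable model of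
`cplus2mvpf(D,k) ∪ {⊥ ← ¬F(k)}` iff `I^prop` is a propositional stable model of
the conjunction of all formulas in `B ∪ P[1] ∪ ⋯ ∪ P[k] ∪ Q[k]`; conversely, a
propositional interpretation `J` of the translated signature is a propositional
stable model of this conjunction iff `J = I^prop` for some multi-valued stable
model `I` of `cplus2mvpf(D,k) ∪ {⊥ ← ¬F(k)}`. -/
theorem incremental_computation_correctness {σ V : Type} [DecidableEq σ] [DecidableEq V]
    (S : CPlusSig σ V) (hdom : ∀ c : σ, 2 ≤ (S.Dom c).card)
    (D : Finset (CausalLaw σ V)) (hwf : ∀ l ∈ D, l.wf S) (hdef : definite D)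
    (k : ℕ) (Fq : MVF (TSC S k) V) (hFq : Fq.wf (tcDom S k)) :
    (∀ I : TSC S k → V, isInterp (tcDom S k) I →
      (isMVStableSet (tcDom S k)
          (cplus2mvpf S D k ∪ {MVF.imp Fq.neg MVF.bot}) I ↔
        isPStableSet
          (Bcomp S D k ∪ (⋃ t ∈ Finset.Icc 1 k, Pcomp S D k t) ∪ Qcomp S k Fq)
          (toPropInterp (tcDom S k) I))) ∧
    (∀ J : PAtom (tcDom S k) → Prop,
      isPStableSet
          (Bcomp S D k ∪ (⋃ t ∈ Finset.Icc 1 k, Pcomp S D k t) ∪ Qcomp S k Fq) J ↔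
        ∃ I : TSC S k → V,
          isMVStableSet (tcDom S k)
            (cplus2mvpf S D k ∪ {MVF.imp Fq.neg MVF.bot}) I ∧
          J = toPropInterp (tcDom S k) I) := by
  have hdom' : ∀ c : TSC S k, 2 ≤ (tcDom S k c).card := fun c => hdom c.1.2
  have hwfΓ : ∀ F ∈ cplus2mvpf S D k ∪ {MVF.imp Fq.neg MVF.bot}, F.wf (tcDom S k) := by
    rintro F (hcp | rfl)
    · exact cplus2mvpf_wf S D hwf k F hcp
    · exact ⟨⟨hFq, trivial⟩, trivial⟩
  have hprog := prog_eq S D k Fq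
  constructor
  · intro I hI
    rw [hprog]
    exact BL_A (tcDom S k) hdom' _ hwfΓ I hI
  · intro J
    rw [hprog]
    exact BL_B (tcDom S k) hdom' _ hwfΓ J
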